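/- Let Δ be a bounded, co-bounded m-invariant set and w ∈ [m]^n with w · Δ = Δ + n. Then the set of elements removed during the action of w (i.e., Δ \ (Δ + n)) is exactly the set of n-generators of the original set Δ, and each step removes exactly one n-generator of Δ. -/

import Mathlib

/-!
Each letter removes at most one element, and by telescoping the `n` letters together remove
`Δ \ w ⋅ Δ = Δ \ (Δ + n)`, the set of `n`-generators. That set has at least `n` elements, since
the least element of `Δ` in each residue class modulo `n` is an `n`-generator. So by pigeonhole
each of the `n` steps removes exactly one of them.
-/

/-- The shift of a set of integers: `Δ + k`. -/
def shiftSet (Δ : Set ℤ) (k : ℤ) : Set ℤ := (· + k) '' Δ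

/-- `Δ` is `k`-invariant if `Δ + k ⊆ Δ`. -/
def Invariant (k : ℤ) (Δ : Set ℤ) : Prop := shiftSet Δ k ⊆ Δ

/-- `Δ` is bounded (has a minimum element). -/
def HasMin (Δ : Set ℤ) : Prop := ∃ a ∈ Δ, ∀ x ∈ Δ, a ≤ x

/-- `Δ` is co-bounded: contains all sufficiently large integers. -/
def CoBounded (Δ : Set ℤ) : Prop := ∃ N : ℤ, ∀ x : ℤ, N ≤ x → x ∈ Δ

/-- The `k`-generators of `Δ`: elements `a ∈ Δ` with `a - k ∉ Δ`, i.e. `Δ \ (Δ + k)`. -/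
def gens (k : ℤ) (Δ : Set ℤ) : Set ℤ := Δ \ shiftSet Δ k

/-- The `(j+1)`-st smallest element of a set of integers. -/
noncomputable def nthSmallest : ℕ → Set ℤ → ℤ
  | 0, S => sInf S
  | j+1, S => nthSmallest j (S \ {sInf S})

/-- The letter `j ∈ [m]` acts on an `m`-invariant set by removing its `(j+1)`-st
smallest `m`-generator. -/
noncomputable def letterAct (m : ℤ) (j : ℕ) (Δ : Set ℤ) : Set ℤ :=
  Δ \ {nthSmallest j (gens m Δ)}

/-- `steps m p Δ i = p_{i-1} ⋯ p_1 p_0 ⋅ Δ`: the word acts one letter at a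
time, the letter `p 0` (rightmost) acting first. -/
noncomputable def steps (m : ℤ) (p : ℕ → ℕ) (Δ : Set ℤ) : ℕ → Set ℤ
  | 0 => Δ
  | i+1 => letterAct m (p i) (steps m p Δ i)

lemma mem_shiftSet {Δ : Set ℤ} {k y : ℤ} : y ∈ shiftSet Δ k ↔ y - k ∈ Δ :=
  ⟨fun ⟨z, hz, hzy⟩ => by rwa [← hzy, add_sub_cancel_right], fun h => ⟨y - k, h, sub_add_cancel y k⟩⟩

lemma Antitone.biUnion_range_sdiff_succ {α : Type*} {s : ℕ → Set α} (hs : Antitone s) :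
    ∀ k, ⋃ i ∈ Finset.range k, (s i \ s (i + 1)) = s 0 \ s k
  | 0 => by simp
  | k + 1 => by
      rw [Finset.range_add_one, Finset.set_biUnion_insert, hs.biUnion_range_sdiff_succ k,
        Set.union_comm, Set.sdiff_union_sdiff_cancel (hs (Nat.zero_le k)) (hs k.le_succ)]

lemma Set.eq_singleton_of_card_le_encard_biUnion {α ι : Type*}
    {A : ι → Set α} {x : ι → α} (hA : ∀ i, A i ⊆ {x i}) {s : Finset ι}
    (hcard : (s.card : ℕ∞) ≤ (⋃ i ∈ s, A i).encard) : ∀ i ∈ s, A i = {x i} := by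
  classical
  intro i₀ hi₀
  refine ((Set.subset_singleton_iff_eq.1 (hA i₀)).resolve_left fun hempty => ?_)
  have hcover : ⋃ i ∈ s, A i ⊆ ((s.erase i₀).image x : Finset α) := by
    simp only [Set.iUnion_subset_iff]
    intro i hi y hy
    have hne : i ≠ i₀ := by rintro rfl; simp [hempty] at hy
    rw [hA i hy]
    exact Finset.mem_image_of_mem x (Finset.mem_erase.2 ⟨hne, hi⟩)
  have hcard_le : s.card ≤ (s.erase i₀).card :=
    (Nat.cast_le.1 <| hcard.trans <| (Set.encard_le_encard hcover).trans_eq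
      (Set.encard_coe_eq_coe_finsetCard _)).trans Finset.card_image_le
  rw [Finset.card_erase_of_mem hi₀] at hcard_le
  have hs_pos := Finset.card_pos.2 ⟨i₀, hi₀⟩
  omega

lemma antitone_steps (m : ℤ) (p : ℕ → ℕ) (Δ : Set ℤ) : Antitone (steps m p Δ) :=
  antitone_nat_of_succ_le fun _ => Set.sdiff_subset

lemma steps_sdiff_steps_succ_subset (m : ℤ) (p : ℕ → ℕ) (Δ : Set ℤ) (i : ℕ) :
    steps m p Δ i \ steps m p Δ (i + 1) ⊆ {nthSmallest (p i) (gens m (steps m p Δ i))} := by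
  rw [steps, letterAct, Set.sdiff_sdiff_right_self]
  exact Set.inter_subset_right

/-- The least element of `Δ` in a residue class modulo `n` is an `n`-generator. -/
lemma exists_mem_gens_modEq {n : ℤ} (hn : 0 < n) {Δ : Set ℤ} (hb : HasMin Δ)
    (hc : CoBounded Δ) (r : ℤ) : ∃ x ∈ gens n Δ, x ≡ r [ZMOD n] := by
  obtain ⟨a, -, ha⟩ := hb
  obtain ⟨N, hN⟩ := hc
  have hlarge : r + n * (|N| + |r|) ∈ Δ := hN _ (by
    nlinarith [le_abs_self N, neg_abs_le r, abs_nonneg N, abs_nonneg r])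
  obtain ⟨x, ⟨hxΔ, hxr⟩, hmin⟩ := Int.exists_least_of_bdd
    (P := fun y => y ∈ Δ ∧ y ≡ r [ZMOD n]) ⟨a, fun y hy => ha y hy.1⟩
    ⟨_, hlarge, Int.modEq_add_fac_self⟩
  refine ⟨x, ⟨hxΔ, fun hx => ?_⟩, hxr⟩
  have := hmin (x - n) ⟨mem_shiftSet.1 hx, Int.sub_modulus_modEq_iff.2 hxr⟩
  linarith

/-- Reducing modulo `n` maps the `n`-generators onto `[n]`. -/
lemma le_encard_gens (n : ℕ) {Δ : Set ℤ} (hb : HasMin Δ) (hc : CoBounded Δ) :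
    (n : ℕ∞) ≤ (gens n Δ).encard := by
  have hsurj : (Finset.range n : Set ℕ) ⊆ (fun x : ℤ => (x % n).toNat) '' gens n Δ := by
    intro r hr
    have hr : (r : ℤ) < n := by simpa using hr
    obtain ⟨x, hx, hxr⟩ := exists_mem_gens_modEq (r.cast_nonneg.trans_lt hr) hb hc r
    refine ⟨x, hx, ?_⟩
    change (x % n).toNat = r
    rw [hxr, Int.emod_eq_of_lt r.cast_nonneg hr, Int.toNat_natCast]
  calc (n : ℕ∞) = (Finset.range n : Set ℕ).encard := by
        rw [Set.encard_coe_eq_coe_finsetCard, Finset.card_range]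
    _ ≤ _ := (Set.encard_le_encard hsurj).trans (Set.encard_image_le _ _)

theorem removed_elements_are_n_generators_general (m n : ℕ) (Δ : Set ℤ)
    (hb : HasMin Δ) (hc : CoBounded Δ)
    (p : ℕ → ℕ)
    (hact : steps m p Δ n = shiftSet Δ n) :
    (⋃ i ∈ Finset.range n, (steps m p Δ i \ steps m p Δ (i+1))) = gens n Δ ∧
    ∀ i < n, ∃ x ∈ gens n Δ, steps m p Δ i \ steps m p Δ (i+1) = {x} := by
  have hremoved : (⋃ i ∈ Finset.range n, (steps m p Δ i \ steps m p Δ (i+1))) = gens n Δ := by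
    rw [(antitone_steps m p Δ).biUnion_range_sdiff_succ, hact]
    rfl
  have hsingle := Set.eq_singleton_of_card_le_encard_biUnion (steps_sdiff_steps_succ_subset m p Δ)
    (s := Finset.range n) (by rw [hremoved, Finset.card_range]; exact le_encard_gens n hb hc)
  refine ⟨hremoved, fun i hi => ?_⟩
  have hstep := hsingle i (Finset.mem_range.2 hi)
  refine ⟨_, ?_, hstep⟩
  rw [← hremoved]
  exact Set.mem_biUnion (Finset.mem_range.2 hi) (hstep ▸ Set.mem_singleton _)

/-- If `w ⋅ Δ = Δ + n`, then the set of elements removed during the action is exactly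
the set of `n`-generators of `Δ`, and each step removes exactly one `n`-generator of `Δ`. -/
theorem removed_elements_are_n_generators (m n : ℕ) (hm : 0 < m) (hn : 0 < n) (Δ : Set ℤ)
    (hI : Invariant m Δ) (hb : HasMin Δ) (hc : CoBounded Δ)
    (p : ℕ → ℕ) (hp : ∀ i < n, p i < m)
    (hact : steps m p Δ n = shiftSet Δ n) :
    (⋃ i ∈ Finset.range n, (steps m p Δ i \ steps m p Δ (i+1))) = gens n Δ ∧
    ∀ i < n, ∃ x ∈ gens n Δ, steps m p Δ i \ steps m p Δ (i+1) = {x} :=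
  removed_elements_are_n_generators_general m n Δ hb hc p hact
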